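/- arXiv:0805.2348 — 2 statements merged into one kernel-verified Lean document; each statement's English description precedes it below -/
import Mathlib

section
/- Path compression does not change the equivalence classes of a disjoint-set forest: let f : α → α be a parent function such that every node has finite depth (for every x there exists m with f^[m+1](x) = f^[m](x)), and write root_f(x) for the eventual stable value of the iterates of f at x. Fix a node n with root r = root_f(n), and define a new parent function g : α → α by g(x) = r if x = f^[i](n) for some i ≥ 0, and g(x) = f(x) otherwise. Then every node also has finite depth with respect to g, and root_g(x) = root_f(x) for every x ∈ α. -/
/-- Path compression does not change the equivalence classes of a
disjoint-set forest.  Let `f : α → α` be a parent function such that every node has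
finite depth, and let `rootf x` be the eventual stable value of the iterates of `f`
at `x` (hypothesis `hf`).  Fix a node `n` with root `r = rootf n`, and let
`g : α → α` be the compressed parent function: `g x = r` whenever `x` lies on the
path from `n` to its root (i.e. `x = f^[i] n` for some `i`), and `g x = f x`
otherwise.  Then every node has finite depth with respect to `g`, and the eventual
stable value of the iterates of `g` at `x` (i.e. `root_g x`) equals `rootf x` for
every `x`. -/
theorem pathCompression_preserves_roots {α : Type*} (f : α → α) (rootf : α → α)
    (hf : ∀ x : α, ∃ m : ℕ, ∀ k : ℕ, m ≤ k → f^[k] x = rootf x)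
    (n r : α) (hr : r = rootf n)
    (g : α → α)
    (hg_path : ∀ x : α, (∃ i : ℕ, f^[i] n = x) → g x = r)
    (hg_off : ∀ x : α, (¬ ∃ i : ℕ, f^[i] n = x) → g x = f x) :
    (∀ x : α, ∃ m : ℕ, g^[m + 1] x = g^[m] x) ∧
      (∀ x : α, ∃ m : ℕ, ∀ k : ℕ, m ≤ k → g^[k] x = rootf x) := by
  have hshift : ∀ x, rootf (f x) = rootf x := by
    intro x
    obtain ⟨m, hm⟩ := hf x
    obtain ⟨m', hm'⟩ := hf (f x)
    have h1 := hm (m + m' + 1) (by omega)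
    have h2 := hm' (m + m') (by omega)
    rw [← Function.iterate_succ_apply] at h2
    rw [h2] at h1; exact h1
  have hpathroot : ∀ i, rootf (f^[i] n) = r := by
    intro i
    induction i with
    | zero => simpa using hr.symm
    | succ i ih => rw [Function.iterate_succ_apply', hshift, ih]
  have hron : ∃ i, f^[i] n = r := by
    obtain ⟨m, hm⟩ := hf n
    exact ⟨m, by rw [hm m le_rfl, hr]⟩
  have hgr : g r = r := hg_path r hron
  have main : ∀ m x, f^[m] x = rootf x → ∃ M : ℕ, ∀ k, M ≤ k → g^[k] x = rootf x := by
    intro m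
    induction m with
    | zero =>
      intro x hx
      simp only [Function.iterate_zero, id_eq] at hx
      have hgx : g x = x := by
        by_cases h : ∃ i, f^[i] n = x
        · obtain ⟨i, hi⟩ := h
          have : rootf x = r := by rw [← hi, hpathroot]
          rw [hg_path x ⟨i, hi⟩, ← this, ← hx]
        · rw [hg_off x h]
          obtain ⟨m', hm'⟩ := hf x
          have h1 := hm' (m' + 1) (by omega)
          rw [Function.iterate_succ_apply'] at h1
          rw [hm' m' le_rfl] at h1
          rw [← hx] at h1; exact h1
      exact ⟨0, fun k _ => by rw [Function.iterate_fixed hgx]; exact hx⟩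
    | succ m ih =>
      intro x hx
      by_cases h : ∃ i, f^[i] n = x
      · obtain ⟨i, hi⟩ := h
        have hroot : rootf x = r := by rw [← hi, hpathroot]
        refine ⟨1, fun k hk => ?_⟩
        obtain ⟨k', rfl⟩ : ∃ k', k = k' + 1 := ⟨k - 1, by omega⟩
        rw [Function.iterate_succ_apply, hg_path x ⟨i, hi⟩,
          Function.iterate_fixed hgr, hroot]
      · have hx' : f^[m] (f x) = rootf (f x) := by
          rw [← Function.iterate_succ_apply, hx, hshift]
        obtain ⟨M, hM⟩ := ih (f x) hx'
        refine ⟨M + 1, fun k hk => ?_⟩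
        obtain ⟨k', rfl⟩ : ∃ k', k = k' + 1 := ⟨k - 1, by omega⟩
        rw [Function.iterate_succ_apply, hg_off x h, hM k' (by omega), hshift]
  have main2 : ∀ x : α, ∃ m : ℕ, ∀ k : ℕ, m ≤ k → g^[k] x = rootf x := by
    intro x
    obtain ⟨m, hm⟩ := hf x
    exact main m x (hm m le_rfl)
  refine ⟨fun x => ?_, main2⟩
  obtain ⟨M, hM⟩ := main2 x
  exact ⟨M, by rw [hM M le_rfl, hM (M + 1) (by omega)]⟩
end

section
/- Merging two trees of a disjoint-set forest unites exactly the two corresponding equivalence classes: let f : α → α be a parent function such that every node has finite depth (for every x there exists m with f^[m+1](x) = f^[m](x)), write root_f(x) for the eventual stable value of the iterates of f at x, and let u, v : α with r₁ = root_f(u) and r₂ = root_f(v), r₁ ≠ r₂. Define g : α → α by g(r₂) = r₁ and g(x) = f(x) for x ≠ r₂. Then every node has finite depth with respect to g, and for every x ∈ α: root_g(x) = r₁ if root_f(x) ∈ {r₁, r₂}, and root_g(x) = root_f(x) otherwise. In particular the partition of α into classes {x : root_g(x) = c} is obtained from the partition induced by f by replacing the two classes of u and v with their union. -/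
/-- Merging two trees of a disjoint-set forest unites exactly the two
corresponding equivalence classes.  Let `f : α → α` be a parent function such that
every node has finite depth, and let `rootf x` be the eventual stable value of the
iterates of `f` at `x` (hypothesis `hf`).  Let `u v : α` with roots `r₁ = rootf u`
and `r₂ = rootf v`, `r₁ ≠ r₂`, and define the merged parent function `g : α → α` by
`g r₂ = r₁` and `g x = f x` for `x ≠ r₂`.  Then every node has finite depth with
respect to `g`, and for every `x` the eventual stable value of the iterates of `g`
at `x` (i.e. `root_g x`) is `r₁` if `rootf x ∈ {r₁, r₂}`, and is `rootf x`
otherwise: the two classes of `u` and `v` are replaced by their union and all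
other classes are unchanged. -/
theorem merge_unites_two_classes {α : Type*} (f : α → α) (rootf : α → α)
    (hf : ∀ x : α, ∃ m : ℕ, ∀ k : ℕ, m ≤ k → f^[k] x = rootf x)
    (u v : α) (r₁ r₂ : α) (hr₁ : r₁ = rootf u) (hr₂ : r₂ = rootf v) (hne : r₁ ≠ r₂)
    (g : α → α) (hg_root : g r₂ = r₁) (hg_off : ∀ x : α, x ≠ r₂ → g x = f x) :
    (∀ x : α, ∃ m : ℕ, g^[m + 1] x = g^[m] x) ∧
      (∀ x : α, rootf x = r₁ ∨ rootf x = r₂ →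
        ∃ m : ℕ, ∀ k : ℕ, m ≤ k → g^[k] x = r₁) ∧
      (∀ x : α, rootf x ≠ r₁ → rootf x ≠ r₂ →
        ∃ m : ℕ, ∀ k : ℕ, m ≤ k → g^[k] x = rootf x) := by
  classical
  have hfixf : ∀ x, f (rootf x) = rootf x := by
    intro x
    obtain ⟨m, hm⟩ := hf x
    calc f (rootf x) = f (f^[m] x) := by rw [hm m le_rfl]
      _ = f^[m+1] x := (Function.iterate_succ_apply' f m x).symm
      _ = rootf x := hm (m+1) (Nat.le_succ m)
  have hr2fix : f r₂ = r₂ := by rw [hr₂]; exact hfixf v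
  have hr1fixf : f r₁ = r₁ := by rw [hr₁]; exact hfixf u
  have hgr1 : ∀ k, g^[k] r₁ = r₁ := by
    have h1 : g r₁ = r₁ := by rw [hg_off r₁ hne, hr1fixf]
    exact fun k => Function.iterate_fixed h1 k
  have lemmaA : ∀ k (x : α), (∀ j < k, f^[j] x ≠ r₂) → g^[k] x = f^[k] x := by
    intro k
    induction k with
    | zero => simp
    | succ k ih =>
      intro x h
      rw [Function.iterate_succ_apply' g, Function.iterate_succ_apply' f,
        ih x (fun j hj => h j (hj.trans (Nat.lt_succ_self k))),
        hg_off _ (h k (Nat.lt_succ_self k))]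
  have hitr2 : ∀ (x : α) (j : ℕ), f^[j] x = r₂ → rootf x = r₂ := by
    intro x j hj
    obtain ⟨m, hm⟩ := hf x
    have h1 : f^[(max m j - j) + j] x = r₂ := by
      rw [Function.iterate_add_apply, hj, Function.iterate_fixed hr2fix]
    rw [Nat.sub_add_cancel (le_max_right m j)] at h1
    rw [← hm _ (le_max_left m j)]
    exact h1
  have caseOther : ∀ x : α, rootf x ≠ r₂ → ∃ m, ∀ k, m ≤ k → g^[k] x = rootf x := by
    intro x hx
    obtain ⟨m, hm⟩ := hf x
    refine ⟨m, fun k hk => ?_⟩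
    rw [lemmaA k x (fun j _ hj2 => hx (hitr2 x j hj2)), hm k hk]
  have caseR2 : ∀ x : α, rootf x = r₂ → ∃ m, ∀ k, m ≤ k → g^[k] x = r₁ := by
    intro x hx
    have hex : ∃ j, f^[j] x = r₂ := by
      obtain ⟨m, hm⟩ := hf x
      exact ⟨m, by rw [hm m le_rfl, hx]⟩
    set j := Nat.find hex with hjdef
    have hj : f^[j] x = r₂ := Nat.find_spec hex
    have hgj : g^[j] x = r₂ := by
      rw [lemmaA j x (fun i hi => Nat.find_min hex hi), hj]
    refine ⟨j + 1, fun k hk => ?_⟩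
    have h1 : g^[(k - (j+1)) + (j+1)] x = r₁ := by
      rw [Function.iterate_add_apply, Function.iterate_succ_apply' g j, hgj, hg_root, hgr1]
    rwa [Nat.sub_add_cancel hk] at h1
  refine ⟨?_, ?_, ?_⟩
  · intro x
    by_cases h : rootf x = r₂
    · obtain ⟨m, hm⟩ := caseR2 x h
      exact ⟨m, by rw [hm (m+1) (Nat.le_succ m), hm m le_rfl]⟩
    · obtain ⟨m, hm⟩ := caseOther x h
      exact ⟨m, by rw [hm (m+1) (Nat.le_succ m), hm m le_rfl]⟩
  · intro x hx
    rcases hx with h | h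
    · obtain ⟨m, hm⟩ := caseOther x (h ▸ hne)
      exact ⟨m, fun k hk => by rw [hm k hk, h]⟩
    · exact caseR2 x h
  · intro x _ hx2
    exact caseOther x hx2
end
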